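/- arXiv:1412.4355 — 2 statements merged into one kernel-verified Lean document; each statement's English description precedes it below -/
import Mathlib

section
/- Let h(t) = 1/(1+e^{-t}). For any Δ_max > 0 and any Δ₁, Δ₂ with |Δ₁| ≤ Δ_max and |Δ₂| ≤ Δ_max, we have h(t+Δ₁)·(1 - h(t+Δ₂)) ≤ 4·e^{Δ_max}·h'(t) for all real t. -/
noncomputable def logistic (t : ℝ) : ℝ := 1 / (1 + Real.exp (-t))

lemma logistic_pos (t : ℝ) : 0 < logistic t := by
  unfold logistic; positivity

lemma logistic_lt_one (t : ℝ) : logistic t < 1 := by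
  unfold logistic
  rw [div_lt_one (by positivity)]
  linarith [Real.exp_pos (-t)]

lemma one_sub_logistic (t : ℝ) : 1 - logistic t = logistic (-t) := by
  unfold logistic
  rw [neg_neg]
  have h1 : (0:ℝ) < 1 + Real.exp (-t) := by positivity
  have h2 : (0:ℝ) < 1 + Real.exp t := by positivity
  have h3 : Real.exp (-t) * Real.exp t = 1 := by
    rw [← Real.exp_add]; simp
  field_simp
  nlinarith

lemma logistic_shift_le (Δmax : ℝ) (Δ : ℝ) (hΔ : |Δ| ≤ Δmax) (t : ℝ) :
    logistic (t + Δ) ≤ Real.exp Δmax * logistic t := by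
  unfold logistic
  rw [mul_one_div, div_le_div_iff₀ (by positivity) (by positivity)]
  have h1 : (1:ℝ) ≤ Real.exp Δmax := Real.one_le_exp (le_trans (abs_nonneg Δ) hΔ)
  have h2 : Real.exp Δmax * Real.exp (-(t + Δ)) = Real.exp (Δmax - Δ) * Real.exp (-t) := by
    rw [← Real.exp_add, ← Real.exp_add]; ring_nf
  have h3 : (1:ℝ) ≤ Real.exp (Δmax - Δ) := by
    have := le_abs_self Δ; exact Real.one_le_exp (by linarith)
  nlinarith [Real.exp_pos (-t)]

theorem logistic_shift_product_bound (Δmax : ℝ) (hΔmax : 0 < Δmax)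
    (Δ₁ Δ₂ : ℝ) (h₁ : |Δ₁| ≤ Δmax) (h₂ : |Δ₂| ≤ Δmax) (t : ℝ) :
    logistic (t + Δ₁) * (1 - logistic (t + Δ₂)) ≤
      4 * Real.exp Δmax * (logistic t * (1 - logistic t)) := by
  have hb1 : logistic (t + Δ₁) ≤ Real.exp Δmax * logistic t :=
    logistic_shift_le Δmax Δ₁ h₁ t
  have hb2 : 1 - logistic (t + Δ₂) ≤ Real.exp Δmax * (1 - logistic t) := by
    rw [one_sub_logistic, one_sub_logistic]
    have h : -(t + Δ₂) = -t + -Δ₂ := by ring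
    rw [h]
    exact logistic_shift_le Δmax (-Δ₂) (by rwa [abs_neg]) (-t)
  have hp1 := logistic_pos (t + Δ₁)
  have hl1 := logistic_lt_one (t + Δ₁)
  have hp2 := logistic_pos (t + Δ₂)
  have hl2 := logistic_lt_one (t + Δ₂)
  have hpt := logistic_pos t
  have hlt := logistic_lt_one t
  have he : (1:ℝ) ≤ Real.exp Δmax := Real.one_le_exp hΔmax.le
  rcases le_or_gt (logistic t) (1/2) with hc | hc
  · nlinarith [mul_le_mul_of_nonneg_right hb1 (by linarith : (0:ℝ) ≤ 1 - logistic (t + Δ₂))]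
  · nlinarith [mul_le_mul_of_nonneg_left hb2 hp1.le]
end

section
/- Let h be the logistic function and φ the standard normal density. Let f₅ : ℝ × ℝ → ℝ be measurable in its second argument with 0 ≤ f₅(η, u) ≤ K for all η, u. Then for fixed η, as σ → ∞, ∫_ℝ f₅(η, σu)·h(η + σu)·φ(u) du = ∫_ℝ f₅(η, σu)·S(η + σu)·φ(u) du + O(σ^{-1}), i.e. the absolute difference between the two integrals is bounded by C/σ for some constant C depending only on K and η. -/
open MeasureTheory

noncomputable def step (t : ℝ) : ℝ := if 0 < t then 1 else 0
noncomputable def stdNormalPDF (u : ℝ) : ℝ :=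
  (Real.sqrt (2 * Real.pi))⁻¹ * Real.exp (-u ^ 2 / 2)

/-! Since `|h t - S t| ≤ exp (-|t|)` and `φ ≤ (2π)^(-1/2)`, the difference of the integrands
is bounded by `K (2π)^(-1/2) exp (-|η + σ u|)`, whose integral in `u` is `σ⁻¹` times that
of `exp (-|t|)` after the substitution `t = η + σ u`. -/

open Real

lemma logistic_eq_sigmoid : logistic = sigmoid := by
  ext t
  rw [logistic, sigmoid_def, one_div]

lemma stdNormalPDF_eq_gaussianPDFReal : stdNormalPDF = ProbabilityTheory.gaussianPDFReal 0 1 := by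
  ext u
  simp [stdNormalPDF, ProbabilityTheory.gaussianPDFReal]

lemma integrable_stdNormalPDF : Integrable stdNormalPDF :=
  stdNormalPDF_eq_gaussianPDFReal ▸ ProbabilityTheory.integrable_gaussianPDFReal 0 1

lemma stdNormalPDF_nonneg (u : ℝ) : 0 ≤ stdNormalPDF u :=
  stdNormalPDF_eq_gaussianPDFReal ▸ ProbabilityTheory.gaussianPDFReal_nonneg 0 1 u

lemma stdNormalPDF_le (u : ℝ) : stdNormalPDF u ≤ (√(2 * π))⁻¹ :=
  mul_le_of_le_one_right (by positivity) (exp_le_one_iff.2 (by nlinarith [sq_nonneg u]))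

lemma measurable_step : Measurable step :=
  Measurable.ite measurableSet_Ioi measurable_const measurable_const

lemma abs_step_le_one (t : ℝ) : |step t| ≤ 1 := by
  unfold step
  split_ifs <;> norm_num

lemma abs_sigmoid_sub_step_le (t : ℝ) : |sigmoid t - step t| ≤ exp (-|t|) := by
  rcases lt_or_ge 0 t with ht | ht
  · have h : 1 - sigmoid t = sigmoid t * exp (-t) := by rw [sigmoid_mul_rexp_neg, sigmoid_neg]
    rw [step, if_pos ht, abs_sub_comm, abs_of_pos ht,
      abs_of_nonneg (sub_nonneg.2 (sigmoid_le_one t)), h]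
    exact mul_le_of_le_one_left (exp_pos _).le (sigmoid_le_one t)
  · have h : sigmoid t = sigmoid (-t) * exp t := by simpa using (sigmoid_mul_rexp_neg (-t)).symm
    rw [step, if_neg ht.not_gt, sub_zero, abs_of_nonpos ht, neg_neg,
      abs_of_nonneg (sigmoid_nonneg t), h]
    exact mul_le_of_le_one_left (exp_pos _).le (sigmoid_le_one _)

lemma integrable_exp_neg_abs : Integrable fun x : ℝ => exp (-|x|) := by
  rw [← integrableOn_univ, ← Set.Iic_union_Ioi (a := (0 : ℝ)), integrableOn_union]
  constructor
  · refine (integrableOn_exp_Iic 0).congr_fun (fun x hx => ?_) measurableSet_Iic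
    rw [abs_of_nonpos hx, neg_neg]
  · refine (exp_neg_integrableOn_Ioi 0 one_pos).congr_fun (fun x hx => ?_) measurableSet_Ioi
    simp [abs_of_pos (Set.mem_Ioi.1 hx)]

section AffineSubstitution

variable {E : Type*} [NormedAddCommGroup E]

lemma MeasureTheory.Integrable.comp_add_mul {g : ℝ → E} (hg : Integrable g) (η : ℝ)
    {σ : ℝ} (hσ : σ ≠ 0) :
    Integrable fun u => g (η + σ * u) := by
  simpa only [add_comm η] using (hg.comp_add_right η).comp_mul_left' hσ

variable [NormedSpace ℝ E]

lemma integral_comp_add_mul (g : ℝ → E) (η : ℝ) {σ : ℝ} (hσ : 0 < σ) :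
    ∫ u, g (η + σ * u) = σ⁻¹ • ∫ x, g x := by
  simp only [add_comm η]
  rw [Measure.integral_comp_mul_left (fun x => g (x + η)), integral_add_right_eq_self,
    abs_of_pos (inv_pos.2 hσ)]

lemma norm_integral_le_of_norm_le_comp_add_mul {F : ℝ → E} {k : ℝ → ℝ} (hk : Integrable k)
    {B η σ : ℝ} (hσ : 0 < σ) (hF : ∀ u, ‖F u‖ ≤ B * k (η + σ * u)) :
    ‖∫ u, F u‖ ≤ B * (∫ x, k x) / σ :=
  calc ‖∫ u, F u‖ ≤ ∫ u, B * k (η + σ * u) :=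
        norm_integral_le_of_norm_le ((hk.comp_add_mul η hσ.ne').const_mul B) (ae_of_all _ hF)
    _ = B * (∫ x, k x) / σ := by
        rw [integral_const_mul, integral_comp_add_mul k η hσ, smul_eq_mul]
        ring

end AffineSubstitution

theorem smoothing_step_approx_general (K : ℝ) (f₅ : ℝ → ℝ → ℝ)
    (hmeas : ∀ η : ℝ, Measurable (f₅ η))
    (hbdd : ∀ η u : ℝ, 0 ≤ f₅ η u ∧ f₅ η u ≤ K) (η : ℝ) :
    ∃ C : ℝ, ∀ σ : ℝ, 0 < σ →
      |(∫ u : ℝ, f₅ η (σ * u) * logistic (η + σ * u) * stdNormalPDF u) -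
        ∫ u : ℝ, f₅ η (σ * u) * step (η + σ * u) * stdNormalPDF u| ≤ C / σ := by
  refine ⟨K * (√(2 * π))⁻¹ * ∫ x, exp (-|x|), fun σ hσ => ?_⟩
  have hK : 0 ≤ K := (hbdd η 0).1.trans (hbdd η 0).2
  have hf_le (u : ℝ) : |f₅ η (σ * u)| ≤ K :=
    abs_le.2 ⟨by linarith [(hbdd η (σ * u)).1], (hbdd η (σ * u)).2⟩
  have hint (g : ℝ → ℝ) (hg : Measurable g) (hg_le : ∀ t, |g t| ≤ 1) :
      Integrable fun u => f₅ η (σ * u) * g (η + σ * u) * stdNormalPDF u :=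
    integrable_stdNormalPDF.bdd_mul (c := K * 1)
      (((hmeas η).comp (measurable_const_mul σ)).mul
        (hg.comp ((measurable_const_mul σ).const_add η))).aestronglyMeasurable
      (ae_of_all _ fun u => by
        rw [Real.norm_eq_abs, abs_mul]
        exact mul_le_mul (hf_le u) (hg_le _) (abs_nonneg _) hK)
  have hsigmoid_le (t : ℝ) : |sigmoid t| ≤ 1 :=
    abs_le.2 ⟨by linarith [sigmoid_nonneg t], sigmoid_le_one t⟩
  rw [logistic_eq_sigmoid, ← integral_sub (hint sigmoid continuous_sigmoid.measurable hsigmoid_le)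
    (hint step measurable_step abs_step_le_one), ← Real.norm_eq_abs]
  refine norm_integral_le_of_norm_le_comp_add_mul (η := η) integrable_exp_neg_abs hσ fun u => ?_
  calc ‖f₅ η (σ * u) * sigmoid (η + σ * u) * stdNormalPDF u
          - f₅ η (σ * u) * step (η + σ * u) * stdNormalPDF u‖
      = |f₅ η (σ * u)| * |sigmoid (η + σ * u) - step (η + σ * u)| * stdNormalPDF u := by
        rw [Real.norm_eq_abs, ← sub_mul, ← mul_sub, abs_mul, abs_mul,
          abs_of_nonneg (stdNormalPDF_nonneg u)]
    _ ≤ K * exp (-|η + σ * u|) * (√(2 * π))⁻¹ := by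
        gcongr
        exacts [stdNormalPDF_nonneg u, hf_le u, abs_sigmoid_sub_step_le _, stdNormalPDF_le u]
    _ = K * (√(2 * π))⁻¹ * exp (-|η + σ * u|) := by ring

theorem smoothing_step_approx (K : ℝ) (hK : 0 < K) (f₅ : ℝ → ℝ → ℝ)
    (hmeas : ∀ η : ℝ, Measurable (f₅ η))
    (hbdd : ∀ η u : ℝ, 0 ≤ f₅ η u ∧ f₅ η u ≤ K) (η : ℝ) :
    ∃ C : ℝ, ∀ σ : ℝ, 0 < σ →
      |(∫ u : ℝ, f₅ η (σ * u) * logistic (η + σ * u) * stdNormalPDF u) -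
        ∫ u : ℝ, f₅ η (σ * u) * step (η + σ * u) * stdNormalPDF u| ≤ C / σ :=
  smoothing_step_approx_general K f₅ hmeas hbdd η
end
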